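/- arXiv:1705.09879 — 7 statements merged into one kernel-verified Lean document; each statement's English description precedes it below -/
import Mathlib

section
/- Every nonempty canonical query is a query (Proposition 2 of the paper, set version): if S is a nonempty subset of D and Qcan(S) := (C \ ⋃S) ∩ (⋃D \ ⋂D) is nonempty, then S ⊆ dx(Qcan(S)) and dnx(Qcan(S)) ≠ ∅; in particular dx(Qcan(S)) ≠ ∅ and dnx(Qcan(S)) ≠ ∅. -/
open Set

variable {α : Type*}

def dx (D : Set (Set α)) (Q : Set α) : Set (Set α) := {Δ ∈ D | Q ∩ Δ = ∅}

def dnx (D : Set (Set α)) (Q : Set α) : Set (Set α) := {Δ ∈ D | (Q ∩ Δ).Nonempty}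

def Qcan (C : Set α) (D S : Set (Set α)) : Set α := (C \ ⋃₀ S) ∩ (⋃₀ D \ ⋂₀ D)

def hittingSet (H : Set α) (X : Set (Set α)) : Prop := H ⊆ ⋃₀ X ∧ ∀ x ∈ X, (H ∩ x).Nonempty

theorem stmt2 (C : Set α) (D : Set (Set α)) (hfin : D.Finite) (hD : D.Nonempty)
    (hsub : ∀ Δ ∈ D, Δ ⊆ C) (S : Set (Set α)) (hS : S ⊆ D) (hSne : S.Nonempty)
    (hQ : (Qcan C D S).Nonempty) :
    S ⊆ dx D (Qcan C D S) ∧ (dnx D (Qcan C D S)).Nonempty ∧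
      (dx D (Qcan C D S)).Nonempty ∧ (dnx D (Qcan C D S)).Nonempty := by
  have hdx : S ⊆ dx D (Qcan C D S) := by
    intro Δ hΔ
    refine ⟨hS hΔ, ?_⟩
    ext x
    simp only [mem_inter_iff, mem_empty_iff_false, iff_false, not_and]
    intro hx hxΔ
    exact hx.1.2 ⟨Δ, hΔ, hxΔ⟩
  have hdnx : (dnx D (Qcan C D S)).Nonempty := by
    obtain ⟨x, hx⟩ := hQ
    obtain ⟨Δ, hΔD, hxΔ⟩ := hx.2.1
    exact ⟨Δ, hΔD, x, hx, hxΔ⟩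
  obtain ⟨Δ, hΔ⟩ := hSne
  exact ⟨hdx, hdnx, ⟨Δ, hdx hΔ⟩, hdnx⟩
end

section
/- Characterization of the positive part of the canonical q-partition: for a nonempty S ⊆ D with Qcan(S) ≠ ∅, one has dx(Qcan(S)) = {Δ ∈ D : Δ \ ⋃S ⊆ ⋂D}, and consequently S ⊆ dx(Qcan(S)). -/
open Set

variable {α : Type*}

theorem stmt5 (C : Set α) (D : Set (Set α)) (hfin : D.Finite) (hD : D.Nonempty)
    (hsub : ∀ Δ ∈ D, Δ ⊆ C) (S : Set (Set α)) (hS : S ⊆ D) (hSne : S.Nonempty)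
    (hQ : (Qcan C D S).Nonempty) :
    dx D (Qcan C D S) = {Δ ∈ D | Δ \ ⋃₀ S ⊆ ⋂₀ D} ∧ S ⊆ dx D (Qcan C D S) := by
  have key : dx D (Qcan C D S) = {Δ ∈ D | Δ \ ⋃₀ S ⊆ ⋂₀ D} := by
    ext Δ
    simp only [dx, Qcan, mem_setOf_eq]
    constructor
    · rintro ⟨hΔD, hemp⟩
      refine ⟨hΔD, fun x hx => ?_⟩
      by_contra hxI
      have : x ∈ ((C \ ⋃₀ S) ∩ (⋃₀ D \ ⋂₀ D)) ∩ Δ :=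
        ⟨⟨⟨hsub Δ hΔD hx.1, hx.2⟩, ⟨⟨Δ, hΔD, hx.1⟩, hxI⟩⟩, hx.1⟩
      rw [hemp] at this
      exact this
    · rintro ⟨hΔD, hsub'⟩
      refine ⟨hΔD, eq_empty_iff_forall_notMem.2 ?_⟩
      rintro x ⟨⟨⟨-, hxS⟩, ⟨-, hxI⟩⟩, hxΔ⟩
      exact hxI (hsub' ⟨hxΔ, hxS⟩)
  refine ⟨key, fun Δ hΔS => ?_⟩
  rw [key]
  exact ⟨hS hΔS, fun x hx => absurd ⟨Δ, hΔS, hx.1⟩ hx.2⟩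
end

section
/- Successors of the initial state (Proposition 3 of the paper, set version): if D is an antichain with |D| ≥ 2, then for every Δ ∈ D the canonical query Qcan({Δ}) is nonempty and induces exactly the partition with positive part {Δ}, i.e., dx(Qcan({Δ})) = {Δ} and dnx(Qcan({Δ})) = D \ {Δ}. -/
open Set

variable {α : Type*}

theorem stmt7 (C : Set α) (D : Set (Set α)) (hfin : D.Finite)
    (hsub : ∀ Δ ∈ D, Δ ⊆ C) (hanti : IsAntichain (· ⊆ ·) D) (hcard : 2 ≤ D.ncard) :
    ∀ Δ ∈ D, (Qcan C D {Δ}).Nonempty ∧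
      dx D (Qcan C D {Δ}) = {Δ} ∧ dnx D (Qcan C D {Δ}) = D \ {Δ} := by

  intro Δ hΔ
  have key : ∀ Δ' ∈ D, Δ' ≠ Δ → (Qcan C D {Δ} ∩ Δ').Nonempty := by
    intro Δ' hΔ' hne
    have hns : ¬ Δ' ⊆ Δ := fun h => hanti hΔ' hΔ hne h
    obtain ⟨x, hx', hxΔ⟩ := not_subset.mp hns
    exact ⟨x, ⟨⟨hsub Δ' hΔ' hx', by simpa using hxΔ⟩,
      ⟨⟨Δ', hΔ', hx'⟩, fun h => hxΔ (h Δ hΔ)⟩⟩, hx'⟩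
  have hdisj : Qcan C D {Δ} ∩ Δ = ∅ := by
    ext x
    simp only [Qcan, mem_inter_iff, mem_diff, mem_sUnion, mem_empty_iff_false, iff_false]
    rintro ⟨⟨⟨-, h2⟩, -⟩, hx⟩
    exact h2 ⟨Δ, rfl, hx⟩
  constructor
  · obtain ⟨Δ', hΔ', hne⟩ := Set.exists_ne_of_one_lt_ncard (s := D) (by omega) Δ
    obtain ⟨x, hx, _⟩ := key Δ' hΔ' hne
    exact ⟨x, hx⟩
  constructor
  · ext Δ'
    simp only [dx, mem_setOf_eq, mem_singleton_iff]
    constructor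
    · rintro ⟨hΔ', he⟩
      by_contra hne
      exact (key Δ' hΔ' hne).ne_empty he
    · rintro rfl
      exact ⟨hΔ, hdisj⟩
  · ext Δ'
    simp only [dnx, mem_setOf_eq, mem_diff, mem_singleton_iff]
    constructor
    · rintro ⟨hΔ', hne⟩
      refine ⟨hΔ', ?_⟩
      rintro rfl
      exact hne.ne_empty hdisj
    · rintro ⟨hΔ', hne⟩
      exact ⟨hΔ', key Δ' hΔ' hne⟩
end

section
/- Diagnoses with equal traits stay together under seed enlargement: let S ⊆ S' ⊆ D be nonempty seeds and let Δ₁, Δ₂ ∈ D have equal traits relative to S, i.e., Δ₁ \ ⋃S = Δ₂ \ ⋃S. Then Δ₁ ∈ dx(Qcan(S')) if and only if Δ₂ ∈ dx(Qcan(S')), where dx(Q) = {Δ ∈ D : Q ∩ Δ = ∅} and Qcan(S') = (C \ ⋃S') ∩ (⋃D \ ⋂D). -/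
open Set

variable {α : Type*}

theorem stmt9 (C : Set α) (D : Set (Set α)) (hfin : D.Finite) (hD : D.Nonempty)
    (hsub : ∀ Δ ∈ D, Δ ⊆ C) (S S' : Set (Set α)) (hSne : S.Nonempty)
    (hSS' : S ⊆ S') (hS'D : S' ⊆ D)
    (Δ₁ Δ₂ : Set α) (hΔ₁ : Δ₁ ∈ D) (hΔ₂ : Δ₂ ∈ D)
    (htrait : Δ₁ \ ⋃₀ S = Δ₂ \ ⋃₀ S) :
    Δ₁ ∈ dx D (Qcan C D S') ↔ Δ₂ ∈ dx D (Qcan C D S') := by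
  have hkey : Qcan C D S' ∩ Δ₁ = Qcan C D S' ∩ Δ₂ := by
    ext x
    have hx : x ∈ Qcan C D S' → x ∉ ⋃₀ S := by
      rintro ⟨⟨_, hnS'⟩, _⟩ hxS
      exact hnS' (sUnion_mono hSS' hxS)
    constructor
    · rintro ⟨hq, h1⟩
      have : x ∈ Δ₂ \ ⋃₀ S := htrait ▸ ⟨h1, hx hq⟩
      exact ⟨hq, this.1⟩
    · rintro ⟨hq, h2⟩
      have : x ∈ Δ₁ \ ⋃₀ S := htrait ▸ (⟨h2, hx hq⟩ : x ∈ Δ₂ \ ⋃₀ S)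
      exact ⟨hq, this.1⟩
  simp only [dx, mem_setOf_eq, hkey, hΔ₁, hΔ₂, true_and]
end

section
/- Minimal queries for a fixed canonical q-partition are exactly the minimal hitting sets of the traits (Proposition 5, set version): let S ⊆ D be nonempty with P = ⟨dx₀, dnx₀⟩ where dx₀ = dx(Qcan(S)) ≠ ∅ and dnx₀ = dnx(Qcan(S)) ≠ ∅. Then a set Q ⊆ ⋃D \ ⋂D is ⊆-minimal with the property that dx(Q) = dx₀ and dnx(Q) = dnx₀ if and only if Q is a ⊆-minimal hitting set of the family of traits {Δ \ ⋃dx₀ : Δ ∈ dnx₀} (where H is a hitting set of a family X iff H ⊆ ⋃X and H ∩ x ≠ ∅ for every x ∈ X). -/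
open Set

variable {α : Type*}

theorem stmt10 (C : Set α) (D : Set (Set α)) (hfin : D.Finite) (hD : D.Nonempty)
    (hsub : ∀ Δ ∈ D, Δ ⊆ C) (S : Set (Set α)) (hS : S ⊆ D) (hSne : S.Nonempty)
    (dx₀ dnx₀ : Set (Set α))
    (hdx₀ : dx₀ = dx D (Qcan C D S)) (hdnx₀ : dnx₀ = dnx D (Qcan C D S))
    (hdx₀ne : dx₀.Nonempty) (hdnx₀ne : dnx₀.Nonempty)
    (Q : Set α) (hQsub : Q ⊆ ⋃₀ D \ ⋂₀ D) :
    (dx D Q = dx₀ ∧ dnx D Q = dnx₀ ∧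
        ∀ Q' ⊂ Q, ¬ (dx D Q' = dx₀ ∧ dnx D Q' = dnx₀)) ↔
      (hittingSet Q ((fun Δ => Δ \ ⋃₀ dx₀) '' dnx₀) ∧
        ∀ Q' ⊂ Q, ¬ hittingSet Q' ((fun Δ => Δ \ ⋃₀ dx₀) '' dnx₀)) := by
  -- dx₀ and dnx₀ partition D
  have hdx₀D : dx₀ ⊆ D := by rw [hdx₀]; intro Δ hΔ; exact hΔ.1
  have hdnx₀D : dnx₀ ⊆ D := by rw [hdnx₀]; intro Δ hΔ; exact hΔ.1
  have hpart : ∀ Δ ∈ D, (Δ ∈ dx₀ ∧ Δ ∉ dnx₀) ∨ (Δ ∈ dnx₀ ∧ Δ ∉ dx₀) := by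
    intro Δ hΔ
    rcases eq_empty_or_nonempty (Qcan C D S ∩ Δ) with h | h
    · left
      refine ⟨hdx₀ ▸ ⟨hΔ, h⟩, ?_⟩
      rw [hdnx₀]; rintro ⟨-, h2⟩; rw [h] at h2; exact h2.ne_empty rfl
    · right
      refine ⟨hdnx₀ ▸ ⟨hΔ, h⟩, ?_⟩
      rw [hdx₀]; rintro ⟨-, h2⟩; rw [h2] at h; exact h.ne_empty rfl
  have key : ∀ Q' : Set α, Q' ⊆ ⋃₀ D →
      ((dx D Q' = dx₀ ∧ dnx D Q' = dnx₀) ↔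
        hittingSet Q' ((fun Δ => Δ \ ⋃₀ dx₀) '' dnx₀)) := by
    intro Q' hQ'
    constructor
    · rintro ⟨h1, h2⟩
      have hdisj : ∀ a ∈ Q', a ∉ ⋃₀ dx₀ := by
        rintro a ha ⟨Δ, hΔ, haΔ⟩
        have : Δ ∈ dx D Q' := h1 ▸ hΔ
        exact absurd this.2 (Set.nonempty_iff_ne_empty.mp ⟨a, ha, haΔ⟩)
      constructor
      · intro a ha
        obtain ⟨Δ, hΔD, haΔ⟩ := hQ' ha
        have hΔ : Δ ∈ dnx D Q' := ⟨hΔD, ⟨a, ha, haΔ⟩⟩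
        rw [h2] at hΔ
        exact ⟨Δ \ ⋃₀ dx₀, ⟨Δ, hΔ, rfl⟩, haΔ, hdisj a ha⟩
      · rintro x ⟨Δ, hΔ, rfl⟩
        have : Δ ∈ dnx D Q' := h2 ▸ hΔ
        obtain ⟨a, ha, haΔ⟩ := this.2
        exact ⟨a, ha, haΔ, hdisj a ha⟩
    · rintro ⟨hsub', hhit⟩
      have hdisj : ∀ a ∈ Q', a ∉ ⋃₀ dx₀ := by
        intro a ha
        obtain ⟨x, ⟨Δ, hΔ, rfl⟩, -, hax⟩ := hsub' ha
        exact hax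
      constructor
      · ext Δ
        constructor
        · rintro ⟨hΔD, hΔe⟩
          rcases hpart Δ hΔD with ⟨h, -⟩ | ⟨h, -⟩
          · exact h
          · obtain ⟨a, ha, haΔ, -⟩ := hhit _ ⟨Δ, h, rfl⟩
            exact absurd hΔe (Set.nonempty_iff_ne_empty.mp ⟨a, ha, haΔ⟩)
        · intro hΔ
          refine ⟨hdx₀D hΔ, ?_⟩
          rw [Set.eq_empty_iff_forall_notMem]
          rintro a ⟨ha, haΔ⟩
          exact hdisj a ha ⟨Δ, hΔ, haΔ⟩
      · ext Δ
        constructor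
        · rintro ⟨hΔD, hΔn⟩
          rcases hpart Δ hΔD with ⟨h, -⟩ | ⟨h, -⟩
          · obtain ⟨a, ha, haΔ⟩ := hΔn
            exact absurd (⟨Δ, h, haΔ⟩ : a ∈ ⋃₀ dx₀) (hdisj a ha)
          · exact h
        · intro hΔ
          obtain ⟨a, ha, haΔ, -⟩ := hhit _ ⟨Δ, hΔ, rfl⟩
          exact ⟨hdnx₀D hΔ, a, ha, haΔ⟩
  have hQD : Q ⊆ ⋃₀ D := fun a ha => (hQsub ha).1
  constructor
  · rintro ⟨h1, h2, hmin⟩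
    refine ⟨(key Q hQD).mp ⟨h1, h2⟩, fun Q' hQ' hhit => hmin Q' hQ' ?_⟩
    exact (key Q' (fun a ha => hQD (hQ'.1 ha))).mpr hhit
  · rintro ⟨hhit, hmin⟩
    obtain ⟨h1, h2⟩ := (key Q hQD).mpr hhit
    exact ⟨h1, h2, fun Q' hQ' hP =>
      hmin Q' hQ' ((key Q' (fun a ha => hQD (hQ'.1 ha))).mp hP)⟩
end

section
/- The canonical query is invariant under closing the seed: for a nonempty S ⊆ D with Qcan(S) ≠ ∅, letting S* := dx(Qcan(S)) = {Δ ∈ D : Δ \ ⋃S ⊆ ⋂D}, one has Qcan(S*) = Qcan(S). -/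
open Set

variable {α : Type*}

theorem stmt13 (C : Set α) (D : Set (Set α)) (hfin : D.Finite) (hD : D.Nonempty)
    (hsub : ∀ Δ ∈ D, Δ ⊆ C) (S : Set (Set α)) (hS : S ⊆ D) (hSne : S.Nonempty)
    (hQ : (Qcan C D S).Nonempty)
    (Sstar : Set (Set α)) (hSstar : Sstar = dx D (Qcan C D S)) :
    Sstar = {Δ ∈ D | Δ \ ⋃₀ S ⊆ ⋂₀ D} ∧ Qcan C D Sstar = Qcan C D S := by
  have key : Sstar = {Δ ∈ D | Δ \ ⋃₀ S ⊆ ⋂₀ D} := by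
    rw [hSstar]
    ext Δ
    simp only [dx, mem_setOf_eq, mem_sep_iff]
    constructor
    · rintro ⟨hΔD, hemp⟩
      refine ⟨hΔD, fun x hx => ?_⟩
      by_contra hxI
      have hxQ : x ∈ Qcan C D S :=
        ⟨⟨hsub Δ hΔD hx.1, hx.2⟩, ⟨⟨Δ, hΔD, hx.1⟩, hxI⟩⟩
      exact absurd hemp (Nonempty.ne_empty ⟨x, hxQ, hx.1⟩)
    · rintro ⟨hΔD, hsubI⟩
      refine ⟨hΔD, eq_empty_iff_forall_notMem.2 fun x hx => ?_⟩
      exact hx.1.2.2 (hsubI ⟨hx.2, hx.1.1.2⟩)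
  refine ⟨key, ?_⟩
  ext x
  simp only [Qcan, mem_inter_iff, mem_diff]
  constructor
  · rintro ⟨⟨hxC, hxS⟩, hxU, hxI⟩
    refine ⟨⟨hxC, fun h => ?_⟩, hxU, hxI⟩
    obtain ⟨Δ, hΔ, hxΔ⟩ := h
    apply hxS
    refine ⟨Δ, ?_, hxΔ⟩
    rw [key]
    exact ⟨hS hΔ, fun y hy => (hy.2 ⟨Δ, hΔ, hy.1⟩).elim⟩
  · rintro ⟨⟨hxC, hxS⟩, hxU, hxI⟩
    refine ⟨⟨hxC, fun h => ?_⟩, hxU, hxI⟩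
    rw [key] at h
    obtain ⟨Δ, hΔ, hxΔ⟩ := h
    exact hxI (hΔ.2 ⟨hxΔ, hxS⟩)
end

section
/- Exact count of canonical q-partitions (Proposition 4): if D is an antichain of subsets of C with |D| ≥ 2, then the number of distinct partitions ⟨dx(Qcan(S)), dnx(Qcan(S))⟩ arising from nonempty seeds S ⊆ D with Qcan(S) ≠ ∅ equals |{⋃S : ∅ ≠ S ⊆ D, ⋃S ≠ ⋃D}|, and this number is at least |D|. -/
open Set

variable {α : Type*}

lemma icap_subset {D S : Set (Set α)} (hS : S ⊆ D) (hne : S.Nonempty) :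
    ⋂₀ D ⊆ ⋃₀ S := by
  obtain ⟨Δ0, h0⟩ := hne
  exact (sInter_subset_of_mem (hS h0)).trans (subset_sUnion_of_mem h0)

lemma qcan_ne (C : Set α) {D S : Set (Set α)} (hsub : ∀ Δ ∈ D, Δ ⊆ C)
    (hS : S ⊆ D) (hne : S.Nonempty) :
    (Qcan C D S).Nonempty ↔ ⋃₀ S ≠ ⋃₀ D := by
  constructor
  · rintro ⟨x, hx⟩ heq
    exact hx.1.2 (heq ▸ hx.2.1)
  · intro hne'
    have hsub' : ⋃₀ S ⊆ ⋃₀ D := sUnion_mono hS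
    obtain ⟨x, hxD, hxS⟩ := exists_of_ssubset (hsub'.ssubset_of_ne hne')
    obtain ⟨Δ, hΔ, hxΔ⟩ := hxD
    exact ⟨x, ⟨hsub Δ hΔ hxΔ, hxS⟩, ⟨Δ, hΔ, hxΔ⟩,
      fun hI => hxS (icap_subset hS hne hI)⟩

lemma dx_dnx_eq (C : Set α) {D S : Set (Set α)} (hsub : ∀ Δ ∈ D, Δ ⊆ C)
    (hS : S ⊆ D) (hne : S.Nonempty) :
    dx D (Qcan C D S) = {Δ ∈ D | Δ ⊆ ⋃₀ S} ∧
    dnx D (Qcan C D S) = {Δ ∈ D | ¬ Δ ⊆ ⋃₀ S} := by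
  have key : ∀ Δ ∈ D, (Qcan C D S ∩ Δ = ∅ ↔ Δ ⊆ ⋃₀ S) := by
    intro Δ hΔ
    constructor
    · intro hE x hxΔ
      by_contra hxS
      have hxI : x ∉ ⋂₀ D := fun hI => hxS (icap_subset hS hne hI)
      have hx : x ∈ Qcan C D S ∩ Δ :=
        ⟨⟨⟨hsub Δ hΔ hxΔ, hxS⟩, ⟨Δ, hΔ, hxΔ⟩, hxI⟩, hxΔ⟩
      rw [hE] at hx
      exact hx
    · intro hΔS
      ext x
      simp only [mem_inter_iff, mem_empty_iff_false, iff_false, not_and]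
      rintro ⟨⟨_, hxS⟩, _⟩ hxΔ
      exact hxS (hΔS hxΔ)
  constructor
  · ext Δ
    simp only [dx, mem_setOf_eq]
    exact and_congr_right (key Δ)
  · ext Δ
    simp only [dnx, mem_setOf_eq]
    refine and_congr_right fun hΔ => ?_
    rw [nonempty_iff_ne_empty]
    exact not_congr (key Δ hΔ)

theorem stmt16 (C : Set α) (D : Set (Set α)) (hfin : D.Finite)
    (hsub : ∀ Δ ∈ D, Δ ⊆ C) (hanti : IsAntichain (· ⊆ ·) D) (hcard : 2 ≤ D.ncard) :
    {p : Set (Set α) × Set (Set α) |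
        ∃ S : Set (Set α), S.Nonempty ∧ S ⊆ D ∧ (Qcan C D S).Nonempty ∧
          p = (dx D (Qcan C D S), dnx D (Qcan C D S))}.ncard =
      {u : Set α | ∃ S : Set (Set α), S.Nonempty ∧ S ⊆ D ∧ ⋃₀ S ≠ ⋃₀ D ∧ u = ⋃₀ S}.ncard ∧
    D.ncard ≤
      {u : Set α | ∃ S : Set (Set α), S.Nonempty ∧ S ⊆ D ∧ ⋃₀ S ≠ ⋃₀ D ∧ u = ⋃₀ S}.ncard := by
  set U : Set (Set α) :=
    {u : Set α | ∃ S : Set (Set α), S.Nonempty ∧ S ⊆ D ∧ ⋃₀ S ≠ ⋃₀ D ∧ u = ⋃₀ S} with hUdef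
  set f : Set α → Set (Set α) × Set (Set α) :=
    fun u => ({Δ ∈ D | Δ ⊆ u}, {Δ ∈ D | ¬ Δ ⊆ u}) with hfdef
  have himg : {p : Set (Set α) × Set (Set α) |
      ∃ S : Set (Set α), S.Nonempty ∧ S ⊆ D ∧ (Qcan C D S).Nonempty ∧
        p = (dx D (Qcan C D S), dnx D (Qcan C D S))} = f '' U := by
    ext p
    simp only [mem_setOf_eq, mem_image, hUdef, hfdef]
    constructor
    · rintro ⟨S, hne, hS, hQ, rfl⟩
      have hne' := (qcan_ne C hsub hS hne).mp hQ
      obtain ⟨h1, h2⟩ := dx_dnx_eq C hsub hS hne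
      exact ⟨⋃₀ S, ⟨S, hne, hS, hne', rfl⟩, by rw [h1, h2]⟩
    · rintro ⟨u, ⟨S, hne, hS, hu, rfl⟩, rfl⟩
      obtain ⟨h1, h2⟩ := dx_dnx_eq C hsub hS hne
      exact ⟨S, hne, hS, (qcan_ne C hsub hS hne).mpr hu, by rw [h1, h2]⟩
  have hrecover : ∀ u ∈ U, ⋃₀ {Δ ∈ D | Δ ⊆ u} = u := by
    rintro u ⟨S, hne, hS, _, rfl⟩
    apply subset_antisymm
    · exact sUnion_subset fun t ht => ht.2
    · exact sUnion_mono fun t ht => ⟨hS ht, subset_sUnion_of_mem ht⟩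
  have hinj : InjOn f U := by
    intro u1 h1 u2 h2 heq
    have hfst : {Δ ∈ D | Δ ⊆ u1} = {Δ ∈ D | Δ ⊆ u2} := congrArg Prod.fst heq
    calc u1 = ⋃₀ {Δ ∈ D | Δ ⊆ u1} := (hrecover u1 h1).symm
      _ = ⋃₀ {Δ ∈ D | Δ ⊆ u2} := by rw [hfst]
      _ = u2 := hrecover u2 h2
  have hDU : D ⊆ U := by
    intro Δ hΔ
    refine ⟨{Δ}, singleton_nonempty _, singleton_subset_iff.mpr hΔ, ?_,
      (sUnion_singleton Δ).symm⟩
    rw [sUnion_singleton]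
    intro heq
    obtain ⟨Δ', hΔ', hne'⟩ := Set.exists_ne_of_one_lt_ncard (show 1 < D.ncard by omega) Δ
    exact hanti hΔ' hΔ hne' (heq ▸ subset_sUnion_of_mem hΔ')
  have hUfin : U.Finite := by
    have : U ⊆ sUnion '' {T : Set (Set α) | T ⊆ D} := by
      rintro u ⟨S, _, hS, _, rfl⟩
      exact ⟨S, hS, rfl⟩
    exact ((hfin.finite_subsets).image _).subset this
  constructor
  · rw [himg, Set.ncard_image_of_injOn hinj]
  · exact Set.ncard_le_ncard hDU hUfin
end
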